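/- arXiv:2405.14901 — 3 statements merged into one kernel-verified Lean document; each statement's English description precedes it below -/
import Mathlib

section
/- Let b ≥ 1, c ≥ b+1 and z ∈ ℝ, z ≠ 0. Then ₁F₁(b;c;z) ≤ (λ_{b−1,c−b−1}/B(b,c−b)) · (e^z − 1)/z. -/
open Real MeasureTheory

/-- Classical Euler beta function `B(x,y) = ∫₀¹ t^(x-1) (1-t)^(y-1) dt`. -/
noncomputable def eulerBeta (x y : ℝ) : ℝ :=
  ∫ t in (0:ℝ)..1, t ^ (x - 1) * (1 - t) ^ (y - 1)

/-- `λ_{x,y} = x^x y^y / (x+y)^(x+y)`; the convention `0^0 = 1` is automatic for `rpow`. -/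
noncomputable def lam (x y : ℝ) : ℝ := x ^ x * y ^ y / (x + y) ^ (x + y)

/-- Pochhammer symbol `(x)_n = x (x+1) ⋯ (x+n-1)`. -/
noncomputable def poch (x : ℝ) (n : ℕ) : ℝ := ∏ k ∈ Finset.range n, (x + k)

/-- Confluent hypergeometric (Kummer) function `₁F₁(b;c;z)`. -/
noncomputable def oneF1 (b c z : ℝ) : ℝ :=
  ∑' n : ℕ, poch b n / poch c n * z ^ n / (Nat.factorial n : ℝ)

/-!
Integrating the exponential series termwise against the beta weight, and using
`B(b + n, d) = (b)ₙ / (b + d)ₙ · B(b, d)`, gives Euler's representation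
`B(b, d) ₁F₁(b; b + d; z) = ∫₀¹ t^(b-1) (1-t)^(d-1) e^(zt) dt`. For `b ≥ 1` and `d = c - b ≥ 1`
both exponents are nonnegative, and by weighted AM-GM the weight `t^x (1-t)^y` is at most its
value `λ_{x,y}` at `t = x / (x + y)`. What remains is `∫₀¹ e^(zt) dt = (e^z - 1) / z`.
-/

lemma lam_comm (x y : ℝ) : lam x y = lam y x := by
  rw [lam, lam, mul_comm, add_comm]

lemma lam_zero_left {y : ℝ} (hy : 0 ≤ y) : lam 0 y = 1 := by
  rcases hy.eq_or_lt with rfl | hy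
  · simp [lam]
  · simp [lam, (rpow_pos_of_pos hy y).ne']

lemma rpow_mul_one_sub_rpow_le_lam_of_pos {x y t : ℝ} (hx : 0 < x) (hy : 0 < y) (ht₀ : 0 ≤ t)
    (ht₁ : t ≤ 1) : t ^ x * (1 - t) ^ y ≤ lam x y := by
  set s := x + y
  have hs : 0 < s := add_pos hx hy
  have h1t : 0 ≤ 1 - t := sub_nonneg.2 ht₁
  have amgm : (t / (x / s)) ^ (x / s) * ((1 - t) / (y / s)) ^ (y / s) ≤ 1 :=
    (geom_mean_le_arith_mean2_weighted (p₁ := t / (x / s)) (p₂ := (1 - t) / (y / s))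
      (by positivity) (by positivity) (by positivity) (by positivity)
      (by rw [← add_div]; exact div_self hs.ne')).trans_eq (by field_simp; ring)
  have amgm_s : (t / (x / s)) ^ x * ((1 - t) / (y / s)) ^ y ≤ 1 := by
    have := rpow_le_one (by positivity) amgm hs.le
    rwa [mul_rpow (by positivity) (by positivity), ← rpow_mul (by positivity),
      ← rpow_mul (by positivity), div_mul_cancel₀ _ hs.ne', div_mul_cancel₀ _ hs.ne'] at this
  have hlam : lam x y = (x / s) ^ x * (y / s) ^ y := by
    rw [lam, div_rpow hx.le hs.le, div_rpow hy.le hs.le, div_mul_div_comm, ← rpow_add hs]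
  calc t ^ x * (1 - t) ^ y
      = (t / (x / s)) ^ x * ((1 - t) / (y / s)) ^ y * lam x y := by
        rw [hlam, div_rpow ht₀ (by positivity), div_rpow h1t (by positivity)]
        field_simp
    _ ≤ lam x y := mul_le_of_le_one_left (by rw [hlam]; positivity) amgm_s

lemma rpow_mul_one_sub_rpow_le_lam {x y t : ℝ} (hx : 0 ≤ x) (hy : 0 ≤ y) (ht₀ : 0 ≤ t)
    (ht₁ : t ≤ 1) : t ^ x * (1 - t) ^ y ≤ lam x y := by
  have h1t : 0 ≤ 1 - t := sub_nonneg.2 ht₁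
  rcases hx.eq_or_lt with rfl | hx
  · simpa [lam_zero_left hy] using rpow_le_one h1t (by linarith) hy
  rcases hy.eq_or_lt with rfl | hy
  · simpa [lam_comm x, lam_zero_left hx.le] using rpow_le_one ht₀ ht₁ hx.le
  exact rpow_mul_one_sub_rpow_le_lam_of_pos hx hy ht₀ ht₁

lemma ofReal_rpow_mul_one_sub_rpow {t : ℝ} (ht : t ∈ Set.Icc (0 : ℝ) 1) (p q : ℝ) :
    ((t ^ (p - 1) * (1 - t) ^ (q - 1) : ℝ) : ℂ) =
      (t : ℂ) ^ ((p : ℂ) - 1) * (1 - (t : ℂ)) ^ ((q : ℂ) - 1) := by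
  rw [Complex.ofReal_mul, Complex.ofReal_cpow ht.1, Complex.ofReal_cpow (sub_nonneg.2 ht.2)]
  push_cast
  rfl

lemma ofReal_eulerBeta (p q : ℝ) : (eulerBeta p q : ℂ) = Complex.betaIntegral p q := by
  rw [eulerBeta, Complex.betaIntegral, ← intervalIntegral.integral_ofReal]
  refine intervalIntegral.integral_congr fun t ht => ?_
  rw [Set.uIcc_of_le zero_le_one] at ht
  exact ofReal_rpow_mul_one_sub_rpow ht p q

lemma eulerBeta_eq_beta {p q : ℝ} (hp : 0 < p) (hq : 0 < q) :
    eulerBeta p q = ProbabilityTheory.beta p q := by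
  rw [ProbabilityTheory.beta_eq_betaIntegralReal p q hp hq, ← ofReal_eulerBeta, Complex.ofReal_re]

lemma eulerBeta_pos {p q : ℝ} (hp : 0 < p) (hq : 0 < q) : 0 < eulerBeta p q :=
  eulerBeta_eq_beta hp hq ▸ ProbabilityTheory.beta_pos hp hq

lemma intervalIntegrable_rpow_mul_one_sub_rpow {p q : ℝ} (hp : 0 < p) (hq : 0 < q) :
    IntervalIntegrable (fun t : ℝ => t ^ (p - 1) * (1 - t) ^ (q - 1)) volume 0 1 := by
  refine ((Complex.betaIntegral_convergent (u := p) (v := q) (by simpa) (by simpa)).norm).congr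
    fun t ht => ?_
  rw [Set.uIoc_of_le zero_le_one] at ht
  rw [← ofReal_rpow_mul_one_sub_rpow ⟨ht.1.le, ht.2⟩, Complex.norm_real,
    Real.norm_of_nonneg (mul_nonneg (rpow_nonneg ht.1.le _) (rpow_nonneg (sub_nonneg.2 ht.2) _))]

lemma Gamma_add_nat_eq_poch_mul {p : ℝ} (hp : 0 < p) (n : ℕ) :
    Gamma (p + n) = poch p n * Gamma p := by
  induction n with
  | zero => simp [poch]
  | succ n ih =>
    rw [Nat.cast_succ, ← add_assoc, Gamma_add_one (by positivity), ih, poch, poch,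
      Finset.prod_range_succ]
    ring

lemma poch_pos {p : ℝ} (hp : 0 < p) (n : ℕ) : 0 < poch p n :=
  Finset.prod_pos fun _ _ => by positivity

lemma beta_add_nat {p q : ℝ} (hp : 0 < p) (hq : 0 < q) (n : ℕ) :
    ProbabilityTheory.beta (p + n) q = poch p n / poch (p + q) n * ProbabilityTheory.beta p q := by
  have hpq : 0 < p + q := add_pos hp hq
  rw [ProbabilityTheory.beta, ProbabilityTheory.beta, add_right_comm,
    Gamma_add_nat_eq_poch_mul hp, Gamma_add_nat_eq_poch_mul hpq]
  have := (poch_pos hpq n).ne'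
  have := (Gamma_pos_of_pos hpq).ne'
  field_simp

lemma hasSum_pow_div_factorial_exp (x : ℝ) :
    HasSum (fun n : ℕ => x ^ n / n.factorial) (exp x) :=
  exp_eq_exp_ℝ ▸ NormedSpace.expSeries_div_hasSum_exp x

lemma hasSum_integral_rpow_mul_one_sub_rpow_mul_exp {b d : ℝ} (hb : 0 < b) (hd : 0 < d)
    (z : ℝ) :
    HasSum (fun n : ℕ => z ^ n / n.factorial * eulerBeta (b + n) d)
      (∫ t in (0 : ℝ)..1, t ^ (b - 1) * (1 - t) ^ (d - 1) * exp (z * t)) := by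
  set g : ℝ → ℝ := fun t => t ^ (b - 1) * (1 - t) ^ (d - 1)
  have hg := intervalIntegrable_rpow_mul_one_sub_rpow hb hd
  have termwise := intervalIntegral.hasSum_integral_of_dominated_convergence
    (F := fun (n : ℕ) t => g t * ((z * t) ^ n / n.factorial))
    (fun n t => |z| ^ n / n.factorial * g t)
    (fun n => (by fun_prop : Measurable _).aestronglyMeasurable)
    (fun n => ae_of_all _ fun t ht => ?bound)
    (ae_of_all _ fun t _ => (summable_pow_div_factorial |z|).mul_right (g t))
    (by simpa only [tsum_mul_right, (hasSum_pow_div_factorial_exp |z|).tsum_eq]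
      using hg.const_mul (exp |z|))
    (ae_of_all _ fun t _ => (hasSum_pow_div_factorial_exp (z * t)).mul_left (g t))
  case bound =>
    rw [Set.uIoc_of_le zero_le_one] at ht
    have hg₀ : 0 ≤ g t := mul_nonneg (rpow_nonneg ht.1.le _) (rpow_nonneg (sub_nonneg.2 ht.2) _)
    have hzt : ‖z * t‖ ≤ |z| := by
      rw [norm_mul, Real.norm_eq_abs, Real.norm_of_nonneg ht.1.le]
      exact mul_le_of_le_one_right (abs_nonneg z) ht.2
    rw [norm_mul, Real.norm_of_nonneg hg₀, mul_comm, norm_div, norm_pow, Real.norm_natCast]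
    gcongr
  refine termwise.congr_fun fun n => ?_
  rw [eulerBeta, ← intervalIntegral.integral_const_mul]
  refine intervalIntegral.integral_congr_ae (ae_of_all _ fun t ht => ?_)
  rw [Set.uIoc_of_le zero_le_one] at ht
  rw [add_sub_right_comm, rpow_add_natCast ht.1.ne', mul_pow]
  ring

lemma eulerBeta_mul_oneF1 {b d : ℝ} (hb : 0 < b) (hd : 0 < d) (z : ℝ) :
    eulerBeta b d * oneF1 b (b + d) z =
      ∫ t in (0 : ℝ)..1, t ^ (b - 1) * (1 - t) ^ (d - 1) * exp (z * t) := by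
  rw [oneF1, ← tsum_mul_left, ← (hasSum_integral_rpow_mul_one_sub_rpow_mul_exp hb hd z).tsum_eq]
  refine tsum_congr fun n => ?_
  rw [eulerBeta_eq_beta hb hd, eulerBeta_eq_beta (by positivity) hd, beta_add_nat hb hd]
  ring

lemma integral_exp_mul_zero_one {z : ℝ} (hz : z ≠ 0) :
    ∫ t in (0 : ℝ)..1, exp (z * t) = (exp z - 1) / z := by
  rw [intervalIntegral.integral_comp_mul_left exp hz, integral_exp, mul_zero, mul_one, exp_zero,
    smul_eq_mul, inv_mul_eq_div]

theorem stmt1 (b c z : ℝ) (hb : 1 ≤ b) (hc : b + 1 ≤ c) (hz : z ≠ 0) :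
    oneF1 b c z ≤ lam (b - 1) (c - b - 1) / eulerBeta b (c - b) * ((Real.exp z - 1) / z) := by
  have hb₁ : 0 ≤ b - 1 := by linarith
  have hd₁ : 0 ≤ c - b - 1 := by linarith
  have hrepr : eulerBeta b (c - b) * oneF1 b c z =
      ∫ t in (0 : ℝ)..1, t ^ (b - 1) * (1 - t) ^ (c - b - 1) * exp (z * t) := by
    simpa only [add_sub_cancel] using
      eulerBeta_mul_oneF1 (b := b) (d := c - b) (by linarith) (by linarith) z
  have hweight : ∫ t in (0 : ℝ)..1, t ^ (b - 1) * (1 - t) ^ (c - b - 1) * exp (z * t) ≤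
      ∫ t in (0 : ℝ)..1, lam (b - 1) (c - b - 1) * exp (z * t) :=
    intervalIntegral.integral_mono_on zero_le_one
      ((((continuous_rpow_const hb₁).mul ((continuous_rpow_const hd₁).comp
        (continuous_sub_left 1))).mul (by fun_prop)).intervalIntegrable 0 1)
      ((by fun_prop : Continuous _).intervalIntegrable 0 1) fun t ht =>
      mul_le_mul_of_nonneg_right (rpow_mul_one_sub_rpow_le_lam hb₁ hd₁ ht.1 ht.2) (exp_nonneg _)
  rw [div_mul_eq_mul_div, le_div_iff₀ (eulerBeta_pos (by linarith) (by linarith)), mul_comm,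
    hrepr, ← integral_exp_mul_zero_one hz, ← intervalIntegral.integral_const_mul]
  exact hweight
end

section
/- Let a > 0 with a ≠ 1, b ≥ 1, c ≥ b+1 and z ∈ ℝ with 0 < |z| < 1. Then ₂F₁(a,b;c;z) ≤ (λ_{b−1,c−b−1}/B(b,c−b)) · (1 − (1−z)^{1−a})/((1−a) z). -/
open Real MeasureTheory

/-- Gauss hypergeometric function `₂F₁(a,b;c;z)`. -/
noncomputable def twoF1 (a b c z : ℝ) : ℝ :=
  ∑' n : ℕ, poch a n * poch b n / poch c n * z ^ n / (Nat.factorial n : ℝ)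

/-!
Because `0 < b < c`, expanding `(1 - z t) ^ (-a)` by the binomial series and integrating termwise
against the beta density `t ^ (b - 1) (1 - t) ^ (c - b - 1)` gives Euler's representation
`₂F₁(a, b; c; z) B(b, c - b) = ∫₀¹ t ^ (b - 1) (1 - t) ^ (c - b - 1) (1 - z t) ^ (-a) dt`.
For `b ≥ 1` and `c ≥ b + 1` both exponents are nonnegative, and weighted AM-GM bounds the
density by its maximum `λ_{b-1, c-b-1}`; the kernel `(1 - z t) ^ (-a)` is positive and has the
elementary integral `(1 - (1 - z) ^ (1 - a)) / ((1 - a) z)`.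
-/

open Set Interval

lemma poch_succ (x : ℝ) (n : ℕ) : poch x (n + 1) = poch x n * (x + n) :=
  Finset.prod_range_succ _ _

lemma poch_pos_s4 {x : ℝ} (hx : 0 < x) (n : ℕ) : 0 < poch x n :=
  Finset.prod_pos fun _ _ => by positivity

lemma poch_eq_ascPochhammer_eval (x : ℝ) (n : ℕ) : poch x n = (ascPochhammer ℝ n).eval x := by
  induction n with
  | zero => simp [poch]
  | succ n ih => rw [poch, Finset.prod_range_succ, ← poch, ih, ascPochhammer_succ_eval]

lemma poch_div_factorial_eq_choose (a : ℝ) (n : ℕ) :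
    poch a n / n.factorial = Ring.choose (a + n - 1) n := by
  rw [← Ring.multichoose_eq, eq_comm, eq_div_iff (by positivity), mul_comm, ← nsmul_eq_mul,
    Ring.factorial_nsmul_multichoose_eq_ascPochhammer, Polynomial.ascPochhammer_smeval_eq_eval,
    poch_eq_ascPochhammer_eval]

lemma hasSum_poch_div_factorial_mul_pow (a : ℝ) {x : ℝ} (hx : |x| < 1) :
    HasSum (fun n : ℕ => poch a n / n.factorial * x ^ n) ((1 - x) ^ (-a)) := by
  have hx' : x ∈ Metric.eball (0 : ℝ) 1 := by
    simpa [← ENNReal.ofReal_one, Metric.eball_ofReal] using hx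
  have := (Real.one_div_one_sub_rpow_hasFPowerSeriesOnBall_zero a).hasSum hx'
  simp only [FormalMultilinearSeries.ofScalars_apply_eq, smul_eq_mul, zero_add] at this
  rw [Real.rpow_neg (by linarith [(abs_lt.mp hx).2]), inv_eq_one_div]
  simpa only [poch_div_factorial_eq_choose] using this

lemma summable_abs_poch_div_factorial_mul_pow (a : ℝ) {x : ℝ} (hx : |x| < 1) :
    Summable (fun n : ℕ => |poch a n / n.factorial| * |x| ^ n) := by
  have hx' : x ∈ Metric.eball (0 : ℝ) (FormalMultilinearSeries.ofScalars ℝ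
      fun n ↦ Ring.choose (a + n - 1) n).radius := by
    refine Metric.eball_subset_eball
      (Real.one_div_one_sub_rpow_hasFPowerSeriesOnBall_zero a).r_le ?_
    simpa [← ENNReal.ofReal_one, Metric.eball_ofReal] using hx
  simpa [FormalMultilinearSeries.ofScalars_apply_eq, poch_div_factorial_eq_choose, abs_mul,
    mul_comm] using FormalMultilinearSeries.summable_norm_apply _ hx'

lemma Real.Gamma_add_nat {x : ℝ} (hx : 0 < x) (n : ℕ) :
    Gamma (x + n) = poch x n * Gamma x := by
  induction n with
  | zero => simp [poch]
  | succ n ih =>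
    rw [Nat.cast_succ, ← add_assoc, Gamma_add_one (by positivity), ih, poch_succ]
    ring

noncomputable def betaDensity (x y t : ℝ) : ℝ := t ^ (x - 1) * (1 - t) ^ (y - 1)

lemma eulerBeta_eq_integral_betaDensity (x y : ℝ) :
    eulerBeta x y = ∫ t in (0:ℝ)..1, betaDensity x y t := rfl

lemma ofReal_eulerBeta_s4 (x y : ℝ) : (eulerBeta x y : ℂ) = Complex.betaIntegral x y := by
  rw [eulerBeta, Complex.betaIntegral, ← intervalIntegral.integral_ofReal]
  refine intervalIntegral.integral_congr fun t ht => ?_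
  rw [uIcc_of_le zero_le_one] at ht
  push_cast
  rw [Complex.ofReal_cpow ht.1, Complex.ofReal_cpow (sub_nonneg.mpr ht.2)]
  push_cast
  rfl

lemma eulerBeta_eq_beta_s4 {x y : ℝ} (hx : 0 < x) (hy : 0 < y) :
    eulerBeta x y = ProbabilityTheory.beta x y := by
  rw [ProbabilityTheory.beta_eq_betaIntegralReal x y hx hy, ← ofReal_eulerBeta_s4, Complex.ofReal_re]

lemma eulerBeta_pos_s4 {x y : ℝ} (hx : 0 < x) (hy : 0 < y) : 0 < eulerBeta x y :=
  eulerBeta_eq_beta_s4 hx hy ▸ ProbabilityTheory.beta_pos hx hy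

lemma intervalIntegrable_betaDensity {x y : ℝ} (hx : 0 < x) (hy : 0 < y) :
    IntervalIntegrable (betaDensity x y) volume 0 1 :=
  -- a non-integrable function has interval integral `0`
  intervalIntegral.intervalIntegrable_of_integral_ne_zero (eulerBeta_pos_s4 hx hy).ne'

lemma eulerBeta_add_nat {b c : ℝ} (hb : 0 < b) (hbc : b < c) (n : ℕ) :
    eulerBeta (b + n) (c - b) = poch b n / poch c n * eulerBeta b (c - b) := by
  have hc : 0 < c := hb.trans hbc
  have hcb : 0 < c - b := sub_pos.mpr hbc
  rw [eulerBeta_eq_beta_s4 (by positivity) hcb, eulerBeta_eq_beta_s4 hb hcb, ProbabilityTheory.beta,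
    ProbabilityTheory.beta, show b + n + (c - b) = c + n by ring, add_sub_cancel,
    Real.Gamma_add_nat hb, Real.Gamma_add_nat hc]
  have := (poch_pos_s4 hc n).ne'
  have := (Real.Gamma_pos_of_pos hc).ne'
  field_simp

lemma betaDensity_mul_pow (x y : ℝ) {t : ℝ} (ht : 0 < t) (n : ℕ) :
    betaDensity x y t * t ^ n = betaDensity (x + n) y t := by
  rw [betaDensity, betaDensity, ← Real.rpow_natCast, mul_right_comm, ← Real.rpow_add ht]
  ring_nf

lemma betaDensity_nonneg (x y : ℝ) {t : ℝ} (ht : t ∈ Icc (0:ℝ) 1) :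
    0 ≤ betaDensity x y t :=
  mul_nonneg (Real.rpow_nonneg ht.1 _) (Real.rpow_nonneg (sub_nonneg.mpr ht.2) _)

lemma abs_mul_lt_one_of_mem_Icc {z t : ℝ} (hz : |z| < 1) (ht : t ∈ Icc (0:ℝ) 1) :
    |z * t| < 1 := by
  rw [abs_mul, abs_of_nonneg ht.1]
  nlinarith [abs_nonneg z, ht.2]

lemma twoF1_mul_eulerBeta (a : ℝ) {b c z : ℝ} (hb : 0 < b) (hbc : b < c) (hz : |z| < 1) :
    twoF1 a b c z * eulerBeta b (c - b) =
      ∫ t in (0:ℝ)..1, betaDensity b (c - b) t * (1 - z * t) ^ (-a) := by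
  have hcb : 0 < c - b := sub_pos.mpr hbc
  set w := betaDensity b (c - b)
  set coef : ℕ → ℝ := fun n => poch a n / n.factorial
  have hw_int : IntervalIntegrable w volume 0 1 := intervalIntegrable_betaDensity hb hcb
  have hsum : HasSum (fun n => ∫ t in (0:ℝ)..1, coef n * z ^ n * (w t * t ^ n))
      (∫ t in (0:ℝ)..1, w t * (1 - z * t) ^ (-a)) := by
    refine intervalIntegral.hasSum_integral_of_dominated_convergence
      (fun n t => |coef n| * |z| ^ n * w t) (fun n => ?_) (fun n => ae_of_all _ fun t ht => ?_)
      (ae_of_all _ fun t _ => (summable_abs_poch_div_factorial_mul_pow a hz).mul_right (w t)) ?_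
      (ae_of_all _ fun t ht => ?_)
    · simp only [w, betaDensity]
      fun_prop
    · rw [uIoc_of_le zero_le_one] at ht
      have hwt : 0 ≤ w t := betaDensity_nonneg _ _ (Ioc_subset_Icc_self ht)
      rw [norm_mul, norm_mul, norm_pow, Real.norm_eq_abs, Real.norm_eq_abs, Real.norm_eq_abs,
        abs_of_nonneg (mul_nonneg hwt (pow_nonneg ht.1.le n))]
      gcongr
      exact mul_le_of_le_one_right hwt (pow_le_one₀ ht.1.le ht.2)
    · simp_rw [tsum_mul_right]
      exact hw_int.const_mul _
    · rw [uIoc_of_le zero_le_one] at ht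
      have hzt := abs_mul_lt_one_of_mem_Icc hz (Ioc_subset_Icc_self ht)
      refine ((hasSum_poch_div_factorial_mul_pow a hzt).mul_left (w t)).congr_fun fun n => ?_
      simp only [coef]
      ring
  have hterm : ∀ n : ℕ, ∫ t in (0:ℝ)..1, coef n * z ^ n * (w t * t ^ n) =
      poch a n * poch b n / poch c n * z ^ n / n.factorial * eulerBeta b (c - b) := by
    intro n
    have hshift : ∀ᵐ t, t ∈ Ι (0:ℝ) 1 → w t * t ^ n = betaDensity (b + n) (c - b) t :=
      ae_of_all _ fun t ht => betaDensity_mul_pow b (c - b) (by simpa using ht.1) n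
    rw [intervalIntegral.integral_const_mul, intervalIntegral.integral_congr_ae hshift,
      ← eulerBeta_eq_integral_betaDensity, eulerBeta_add_nat hb hbc]
    ring
  simp_rw [hterm] at hsum
  rw [twoF1, ← tsum_mul_right, hsum.tsum_eq]

lemma rpow_self_pos {x : ℝ} (hx : 0 ≤ x) : 0 < x ^ x := by
  rcases hx.eq_or_lt with rfl | hx
  · simp
  · exact Real.rpow_pos_of_pos hx x

lemma rpow_mul_one_sub_rpow_le_lam_s4 {p q t : ℝ} (hp : 0 ≤ p) (hq : 0 ≤ q)
    (ht : t ∈ Icc (0:ℝ) 1) :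
    t ^ p * (1 - t) ^ q ≤ lam p q := by
  obtain ⟨ht0, ht1⟩ := ht
  have h1t : 0 ≤ 1 - t := sub_nonneg.mpr ht1
  rcases (add_nonneg hp hq).eq_or_lt with hs | hs
  · obtain ⟨rfl, rfl⟩ : p = 0 ∧ q = 0 := ⟨by linarith, by linarith⟩
    simp [lam]
  have weighted_le : ∀ w u : ℝ, 0 ≤ u → w / (p + q) * (u * (p + q) / w) ≤ u := by
    intro w u hu
    rcases eq_or_ne w 0 with rfl | hw
    · simpa using hu
    · field_simp; rfl
  -- the weighted arithmetic mean of the two points below is at most `t + (1 - t) = 1`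
  have amgm := Real.geom_mean_le_arith_mean2_weighted (w₁ := p / (p + q)) (w₂ := q / (p + q))
    (p₁ := t * (p + q) / p) (p₂ := (1 - t) * (p + q) / q) (by positivity) (by positivity)
    (by positivity) (by positivity) (by field_simp)
  have key : (t * (p + q) / p) ^ p * ((1 - t) * (p + q) / q) ^ q ≤ 1 := by
    have := Real.rpow_le_rpow (by positivity)
      (amgm.trans (show _ ≤ (1:ℝ) by linarith [weighted_le p t ht0, weighted_le q (1 - t) h1t]))
      hs.le
    rwa [Real.one_rpow, Real.mul_rpow (by positivity) (by positivity),
      ← Real.rpow_mul (by positivity), ← Real.rpow_mul (by positivity),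
      div_mul_cancel₀ _ hs.ne', div_mul_cancel₀ _ hs.ne'] at this
  rw [Real.div_rpow (by positivity) hp, Real.div_rpow (by positivity) hq,
    Real.mul_rpow ht0 hs.le, Real.mul_rpow h1t hs.le, div_mul_div_comm,
    div_le_one (mul_pos (rpow_self_pos hp) (rpow_self_pos hq))] at key
  rw [lam, le_div_iff₀ (Real.rpow_pos_of_pos hs _), Real.rpow_add hs]
  linarith

lemma integral_one_sub_mul_rpow_neg {a z : ℝ} (ha : a ≠ 1) (hz0 : z ≠ 0) (hz1 : z < 1) :
    ∫ t in (0:ℝ)..1, (1 - z * t) ^ (-a) = (1 - (1 - z) ^ (1 - a)) / ((1 - a) * z) := by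
  have h1a : 1 - a ≠ 0 := sub_ne_zero.mpr ha.symm
  have hexp : -a ≠ -1 ∧ (0:ℝ) ∉ [[1 - z, 1]] :=
    ⟨by contrapose! ha; linarith, notMem_uIcc_of_lt (sub_pos.mpr hz1) one_pos⟩
  rw [intervalIntegral.integral_comp_sub_mul (fun s => s ^ (-a)) hz0, mul_zero, sub_zero, mul_one,
    integral_rpow (Or.inr hexp), Real.one_rpow, show -a + 1 = 1 - a by ring, smul_eq_mul]
  field_simp

theorem stmt4_general (a b c z : ℝ) (ha1 : a ≠ 1) (hb : 1 ≤ b) (hc : b + 1 ≤ c)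
    (hz0 : 0 < |z|) (hz1 : |z| < 1) :
    twoF1 a b c z ≤
      lam (b - 1) (c - b - 1) / eulerBeta b (c - b) *
        ((1 - (1 - z) ^ (1 - a)) / ((1 - a) * z)) := by
  have hbc : b < c := by linarith
  have hkernel_pos : ∀ t ∈ Icc (0:ℝ) 1, 0 < 1 - z * t := fun t ht =>
    sub_pos.mpr (abs_lt.mp (abs_mul_lt_one_of_mem_Icc hz1 ht)).2
  have hkernel : ContinuousOn (fun t : ℝ => (1 - z * t) ^ (-a)) [[0, 1]] := by
    rw [uIcc_of_le zero_le_one]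
    exact ContinuousOn.rpow_const (by fun_prop) fun t ht => Or.inl (hkernel_pos t ht).ne'
  have hle : ∫ t in (0:ℝ)..1, betaDensity b (c - b) t * (1 - z * t) ^ (-a) ≤
      ∫ t in (0:ℝ)..1, lam (b - 1) (c - b - 1) * (1 - z * t) ^ (-a) :=
    intervalIntegral.integral_mono_on zero_le_one
      ((intervalIntegrable_betaDensity (by linarith) (by linarith)).mul_continuousOn hkernel)
      (hkernel.intervalIntegrable.const_mul _) fun t ht =>
        mul_le_mul_of_nonneg_right (rpow_mul_one_sub_rpow_le_lam_s4 (by linarith) (by linarith) ht)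
          (Real.rpow_nonneg (hkernel_pos t ht).le _)
  rw [← twoF1_mul_eulerBeta a (by linarith) hbc hz1, intervalIntegral.integral_const_mul,
    integral_one_sub_mul_rpow_neg ha1 (abs_pos.mp hz0) (lt_of_abs_lt hz1)] at hle
  rwa [div_mul_eq_mul_div, le_div_iff₀ (eulerBeta_pos_s4 (by linarith) (by linarith))]

theorem stmt4 (a b c z : ℝ) (ha : 0 < a) (ha1 : a ≠ 1) (hb : 1 ≤ b) (hc : b + 1 ≤ c)
    (hz0 : 0 < |z|) (hz1 : |z| < 1) :
    twoF1 a b c z ≤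
      lam (b - 1) (c - b - 1) / eulerBeta b (c - b) *
        ((1 - (1 - z) ^ (1 - a)) / ((1 - a) * z)) :=
  stmt4_general a b c z ha1 hb hc hz0 hz1
end

section
/- (Grüss discrete inequality) Let n ≥ 1 and let (x_k), (y_k), (m_k), 1 ≤ k ≤ n, be families of real numbers such that m_k ≥ 0, γ ≤ x_k ≤ Γ and φ ≤ y_k ≤ Φ for all k ∈ {1,…,n}. Then |(∑_{k=1}^n m_k)(∑_{k=1}^n m_k x_k y_k) − (∑_{k=1}^n m_k x_k)(∑_{k=1}^n m_k y_k)| ≤ (1/4)(∑_{k=1}^n m_k)² (Γ−γ)(Φ−φ). -/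
/-!
Write `T(x, y) = (∑ m)(∑ m x y) - (∑ m x)(∑ m y)`. Korkine's identity
`2 T(x, y) = ∑ᵢ ∑ⱼ mᵢ mⱼ (xᵢ - xⱼ)(yᵢ - yⱼ)` exhibits `T` as a positive semidefinite symmetric
bilinear form, so `T(x, y)² ≤ T(x, x) T(y, y)` by Cauchy–Schwarz. Summing
`mₖ (Γ - xₖ)(xₖ - γ) ≥ 0` and completing the square gives `T(x, x) ≤ ((∑ m)(Γ - γ) / 2)²`.
-/

open Finset

namespace Finset

variable {ι : Type*}

theorem weighted_sum_mul_sq_le_sq_mul_sq {R : Type*} [CommSemiring R] [LinearOrder R]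
    [IsStrictOrderedRing R] [ExistsAddOfLE R] (s : Finset ι) {w : ι → R}
    (hw : ∀ i ∈ s, 0 ≤ w i) (f g : ι → R) :
    (∑ i ∈ s, w i * f i * g i) ^ 2 ≤ (∑ i ∈ s, w i * f i ^ 2) * ∑ i ∈ s, w i * g i ^ 2 :=
  sum_sq_le_sum_mul_sum_of_sq_le_mul s
    (fun i hi => mul_nonneg (hw i hi) (sq_nonneg _))
    (fun i hi => mul_nonneg (hw i hi) (sq_nonneg _))
    (fun i _ => le_of_eq (by ring))

def chebyshevFunctional (s : Finset ι) (m x y : ι → ℝ) : ℝ :=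
  (∑ k ∈ s, m k) * (∑ k ∈ s, m k * x k * y k) - (∑ k ∈ s, m k * x k) * (∑ k ∈ s, m k * y k)

variable (s : Finset ι) (m : ι → ℝ)

theorem two_mul_chebyshevFunctional (x y : ι → ℝ) :
    2 * chebyshevFunctional s m x y =
      ∑ p ∈ s ×ˢ s, m p.1 * m p.2 * (x p.1 - x p.2) * (y p.1 - y p.2) := by
  have expand : ∀ i j, m i * m j * (x i - x j) * (y i - y j) =
      m i * x i * y i * m j + m i * (m j * x j * y j)
        - m i * x i * (m j * y j) - m i * y i * (m j * x j) := fun i j => by ring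
  simp only [sum_product, expand, sum_add_distrib, sum_sub_distrib, ← mul_sum, ← sum_mul,
    chebyshevFunctional]
  ring

variable {s m}

theorem chebyshevFunctional_self_nonneg (hm : ∀ k ∈ s, 0 ≤ m k) (x : ι → ℝ) :
    0 ≤ chebyshevFunctional s m x x := by
  have : 0 ≤ 2 * chebyshevFunctional s m x x := by
    rw [two_mul_chebyshevFunctional]
    refine sum_nonneg fun p hp => ?_
    rw [mem_product] at hp
    rw [mul_assoc]
    exact mul_nonneg (mul_nonneg (hm _ hp.1) (hm _ hp.2)) (mul_self_nonneg _)
  linarith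

theorem chebyshevFunctional_sq_le (hm : ∀ k ∈ s, 0 ≤ m k) (x y : ι → ℝ) :
    chebyshevFunctional s m x y ^ 2 ≤
      chebyshevFunctional s m x x * chebyshevFunctional s m y y := by
  have hw : ∀ p ∈ s ×ˢ s, 0 ≤ m p.1 * m p.2 := fun p hp => by
    rw [mem_product] at hp
    exact mul_nonneg (hm _ hp.1) (hm _ hp.2)
  have cs := weighted_sum_mul_sq_le_sq_mul_sq (s ×ˢ s) hw
    (fun p => x p.1 - x p.2) (fun p => y p.1 - y p.2)
  simp only [sq (_ - _), ← mul_assoc, ← two_mul_chebyshevFunctional] at cs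
  nlinarith

theorem chebyshevFunctional_self_le (hm : ∀ k ∈ s, 0 ≤ m k) {x : ι → ℝ} {a b : ℝ}
    (hxl : ∀ k ∈ s, a ≤ x k) (hxu : ∀ k ∈ s, x k ≤ b) :
    chebyshevFunctional s m x x ≤ ((∑ k ∈ s, m k) * (b - a) / 2) ^ 2 := by
  have hprod : 0 ≤ ∑ k ∈ s, m k * ((b - x k) * (x k - a)) := sum_nonneg fun k hk =>
    mul_nonneg (hm k hk) (mul_nonneg (sub_nonneg.2 (hxu k hk)) (sub_nonneg.2 (hxl k hk)))
  have expand : ∀ k, m k * ((b - x k) * (x k - a)) =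
      (a + b) * (m k * x k) - a * b * m k - m k * x k * x k := fun k => by ring
  simp only [expand, sum_sub_distrib, ← mul_sum] at hprod
  unfold chebyshevFunctional
  nlinarith [mul_nonneg (sum_nonneg hm) hprod,
    sq_nonneg (∑ k ∈ s, m k * x k - (a + b) / 2 * ∑ k ∈ s, m k)]

theorem abs_chebyshevFunctional_le (hm : ∀ k ∈ s, 0 ≤ m k) {x y : ι → ℝ} {γ Γ φ Φ : ℝ}
    (hxl : ∀ k ∈ s, γ ≤ x k) (hxu : ∀ k ∈ s, x k ≤ Γ)
    (hyl : ∀ k ∈ s, φ ≤ y k) (hyu : ∀ k ∈ s, y k ≤ Φ) :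
    |chebyshevFunctional s m x y| ≤ (1 / 4) * (∑ k ∈ s, m k) ^ 2 * (Γ - γ) * (Φ - φ) := by
  obtain rfl | ⟨k, hk⟩ := s.eq_empty_or_nonempty
  · simp [chebyshevFunctional]
  have hγΓ : 0 ≤ Γ - γ := sub_nonneg.2 ((hxl k hk).trans (hxu k hk))
  have hφΦ : 0 ≤ Φ - φ := sub_nonneg.2 ((hyl k hk).trans (hyu k hk))
  apply abs_le_of_sq_le_sq _ (by positivity)
  calc chebyshevFunctional s m x y ^ 2
      ≤ chebyshevFunctional s m x x * chebyshevFunctional s m y y :=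
        chebyshevFunctional_sq_le hm x y
    _ ≤ ((∑ k ∈ s, m k) * (Γ - γ) / 2) ^ 2 * ((∑ k ∈ s, m k) * (Φ - φ) / 2) ^ 2 :=
        mul_le_mul (chebyshevFunctional_self_le hm hxl hxu)
          (chebyshevFunctional_self_le hm hyl hyu)
          (chebyshevFunctional_self_nonneg hm y) (sq_nonneg _)
    _ = ((1 / 4) * (∑ k ∈ s, m k) ^ 2 * (Γ - γ) * (Φ - φ)) ^ 2 := by ring

end Finset

theorem stmt7_general (n : ℕ) (x y m : ℕ → ℝ) (γ Γ φ Φ : ℝ)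
    (hm : ∀ k ∈ Finset.Icc 1 n, 0 ≤ m k)
    (hxl : ∀ k ∈ Finset.Icc 1 n, γ ≤ x k) (hxu : ∀ k ∈ Finset.Icc 1 n, x k ≤ Γ)
    (hyl : ∀ k ∈ Finset.Icc 1 n, φ ≤ y k) (hyu : ∀ k ∈ Finset.Icc 1 n, y k ≤ Φ) :
    |(∑ k ∈ Finset.Icc 1 n, m k) * (∑ k ∈ Finset.Icc 1 n, m k * x k * y k) -
        (∑ k ∈ Finset.Icc 1 n, m k * x k) * (∑ k ∈ Finset.Icc 1 n, m k * y k)| ≤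
      (1 / 4) * (∑ k ∈ Finset.Icc 1 n, m k) ^ 2 * (Γ - γ) * (Φ - φ) :=
  abs_chebyshevFunctional_le hm hxl hxu hyl hyu

theorem stmt7 (n : ℕ) (hn : 1 ≤ n) (x y m : ℕ → ℝ) (γ Γ φ Φ : ℝ)
    (hm : ∀ k ∈ Finset.Icc 1 n, 0 ≤ m k)
    (hxl : ∀ k ∈ Finset.Icc 1 n, γ ≤ x k) (hxu : ∀ k ∈ Finset.Icc 1 n, x k ≤ Γ)
    (hyl : ∀ k ∈ Finset.Icc 1 n, φ ≤ y k) (hyu : ∀ k ∈ Finset.Icc 1 n, y k ≤ Φ) :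
    |(∑ k ∈ Finset.Icc 1 n, m k) * (∑ k ∈ Finset.Icc 1 n, m k * x k * y k) -
        (∑ k ∈ Finset.Icc 1 n, m k * x k) * (∑ k ∈ Finset.Icc 1 n, m k * y k)| ≤
      (1 / 4) * (∑ k ∈ Finset.Icc 1 n, m k) ^ 2 * (Γ - γ) * (Φ - φ) :=
  stmt7_general n x y m γ Γ φ Φ hm hxl hxu hyl hyu
end
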